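/- If an infinite word u satisfies property R_2, then u has no maximal right special factor. -/
import Mathlib


variable {A : Type*}

/-- The factor of `u` of length `n` starting at position `j`. -/
def factorAt (u : ℕ → A) (j n : ℕ) : List A :=
  (List.range n).map (fun i => u (j + i))

/-- `j` is an occurrence of the finite word `w` in `u`. -/
def OccursAt (u : ℕ → A) (w : List A) (j : ℕ) : Prop :=
  factorAt u j w.length = w

/-- `w` is a factor of the infinite word `u`. -/
def IsFactor (u : ℕ → A) (w : List A) : Prop :=
  ∃ j, OccursAt u w j

/-- `v` is a return word of `w` in `u`: the word between two successive occurrences of `w`. -/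
def IsReturnWord (u : ℕ → A) (w v : List A) : Prop :=
  ∃ j k, j < k ∧ OccursAt u w j ∧ OccursAt u w k ∧
    (∀ l, j < l → l < k → ¬ OccursAt u w l) ∧ v = factorAt u j (k - j)

/-- The set `R(w)` of return words of `w` in `u`. -/
def returnWords (u : ℕ → A) (w : List A) : Set (List A) :=
  {v | IsReturnWord u w v}

/-- Property `R_m`: every factor of `u` has exactly `m` return words. -/
def PropertyR (u : ℕ → A) (m : ℕ) : Prop :=
  ∀ w, IsFactor u w → (returnWords u w).Finite ∧ (returnWords u w).ncard = m

/-- The set of left extensions of `w`. -/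
def leftExt (u : ℕ → A) (w : List A) : Set A := {a | IsFactor u (a :: w)}

/-- The set of right extensions of `w`. -/
def rightExt (u : ℕ → A) (w : List A) : Set A := {b | IsFactor u (w ++ [b])}

def LeftSpecial (u : ℕ → A) (w : List A) : Prop := 2 ≤ (leftExt u w).ncard

def RightSpecial (u : ℕ → A) (w : List A) : Prop := 2 ≤ (rightExt u w).ncard

/-- The set of pairs `(a, b)` such that `a w b` is a factor of `u`. -/
def extPairs (u : ℕ → A) (w : List A) : Set (A × A) :=
  {p | IsFactor u (p.1 :: (w ++ [p.2]))}

/-- The bilateral order `B(w)`. -/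
noncomputable def bilateralOrder (u : ℕ → A) (w : List A) : ℤ :=
  ((extPairs u w).ncard : ℤ) - (leftExt u w).ncard - (rightExt u w).ncard + 1

/-- `w` is a weak bispecial factor of `u`. -/
def WeakBispecial (u : ℕ → A) (w : List A) : Prop :=
  IsFactor u w ∧ bilateralOrder u w < 0

/-- The factor complexity of `u`. -/
noncomputable def Complexity (u : ℕ → A) (n : ℕ) : ℕ :=
  {w : List A | w.length = n ∧ IsFactor u w}.ncard

/-- `u` is recurrent: every factor occurs at least twice. -/
def Recurrent (u : ℕ → A) : Prop :=
  ∀ w, IsFactor u w → ∃ j k, j < k ∧ OccursAt u w j ∧ OccursAt u w k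

/-- `u` is uniformly recurrent. -/
def UniformlyRecurrent (u : ℕ → A) : Prop :=
  ∀ n : ℕ, ∃ N : ℕ, ∀ w, IsFactor u w → w.length = N →
    ∀ v, IsFactor u v → v.length = n → v <:+: w

def EventuallyPeriodic (u : ℕ → A) : Prop :=
  ∃ p, 0 < p ∧ ∃ N, ∀ n, N ≤ n → u (n + p) = u n

/-- `w` is a maximal right special factor. -/
def MaximalRightSpecial (u : ℕ → A) (w : List A) : Prop :=
  IsFactor u w ∧ RightSpecial u w ∧
    ∀ v, IsFactor u v → RightSpecial u v → w <:+ v → v = w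

/-- The return word `v` of `w` starts with the letter `b`. -/
def StartsWithLetter (w v : List A) (b : A) : Prop := (w ++ [b]) <+: (v ++ w)
@[simp] lemma factorAt_length (u : ℕ → A) (j n : ℕ) : (factorAt u j n).length = n := by
  simp [factorAt]

lemma factorAt_getElem (u : ℕ → A) {j n i : ℕ} (h : i < n) :
    (factorAt u j n)[i]'(by simpa using h) = u (j + i) := by
  simp [factorAt]

lemma occursAt_iff {u : ℕ → A} {w : List A} {j : ℕ} :
    OccursAt u w j ↔ ∀ i, (hi : i < w.length) → u (j + i) = w[i] := by
  unfold OccursAt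
  constructor
  · intro h i hi
    rw [← factorAt_getElem u hi]
    simp [h]
  · intro h
    apply List.ext_getElem (by simp)
    intro i h1 h2
    rw [factorAt_getElem u (by simpa using h1)]
    exact h i h2

lemma occursAt_append {u : ℕ → A} {x y : List A} {j : ℕ} :
    OccursAt u (x ++ y) j ↔ OccursAt u x j ∧ OccursAt u y (j + x.length) := by
  simp only [occursAt_iff]
  constructor
  · intro h
    constructor
    · intro i hi
      rw [h i (by simp; omega), List.getElem_append_left hi]
    · intro i hi
      rw [show j + x.length + i = j + (x.length + i) by omega, h _ (by simp; omega),
        List.getElem_append_right (by omega)]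
      congr 1
      omega
  · rintro ⟨h1, h2⟩ i hi
    rcases Nat.lt_or_ge i x.length with hx | hx
    · rw [List.getElem_append_left hx]; exact h1 i hx
    · rw [List.getElem_append_right hx, ← h2 (i - x.length) (by simp at hi; omega)]
      congr 1
      omega

lemma occursAt_factorAt (u : ℕ → A) (j n : ℕ) : OccursAt u (factorAt u j n) j := by
  simp [OccursAt]

/-- if w occurs at j and prefix of length L (L ≥ j + |w|) occurs at t, then w occurs at t+j -/
lemma occursAt_of_prefix_occurs {u : ℕ → A} {w : List A} {j L t : ℕ}
    (hw : OccursAt u w j) (hL : j + w.length ≤ L)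
    (ht : OccursAt u (factorAt u 0 L) t) : OccursAt u w (t + j) := by
  rw [occursAt_iff] at hw ht ⊢
  intro i hi
  have h1 := ht (j + i) (by simp; omega)
  rw [factorAt_getElem u (by omega)] at h1
  rw [show t + j + i = t + (j + i) by omega, h1]
  simpa using hw i hi

section
variable {u : ℕ → A} (h : PropertyR u 2)
include h

lemma returnWords_nonempty {w : List A} (hw : IsFactor u w) : (returnWords u w).Nonempty := by
  rcases h w hw with ⟨hf, hc⟩
  rw [← Set.ncard_pos hf]
  omega

/-- every factor has a later occurrence -/
lemma exists_occurs_gt {w : List A} {j : ℕ} (hw : OccursAt u w j) :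
    ∃ k, j < k ∧ OccursAt u w k := by
  have hP : IsFactor u (factorAt u 0 (j + w.length)) := ⟨0, occursAt_factorAt u 0 _⟩
  rcases returnWords_nonempty h hP with ⟨v, j', k', hjk, _, hk', _, _⟩
  exact ⟨k' + j, by omega, occursAt_of_prefix_occurs hw le_rfl hk'⟩

lemma exists_occurs_ge {w : List A} (hw : IsFactor u w) (M : ℕ) :
    ∃ k, M ≤ k ∧ OccursAt u w k := by
  induction M with
  | zero => rcases hw with ⟨j, hj⟩; exact ⟨j, Nat.zero_le j, hj⟩
  | succ n ih =>
    rcases ih with ⟨k, hk, hocc⟩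
    rcases exists_occurs_gt h hocc with ⟨k', hk', hocc'⟩
    exact ⟨k', by omega, hocc'⟩

end

open Classical in
/-- the next occurrence of `w` strictly after `j` (junk value if none) -/
noncomputable def nxt (u : ℕ → A) (w : List A) (j : ℕ) : ℕ :=
  if hx : ∃ k, j < k ∧ OccursAt u w k then Nat.find hx else j + 1

/-- the return word starting at occurrence `j` -/
noncomputable def retAt (u : ℕ → A) (w : List A) (j : ℕ) : List A :=
  factorAt u j (nxt u w j - j)

section
open Classical
variable {u : ℕ → A} {w : List A} {j : ℕ}
variable (hx : ∃ k, j < k ∧ OccursAt u w k)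
include hx

lemma nxt_gt : j < nxt u w j := by
  rw [nxt, dif_pos hx]; exact (Nat.find_spec hx).1

lemma nxt_occurs : OccursAt u w (nxt u w j) := by
  rw [nxt, dif_pos hx]; exact (Nat.find_spec hx).2

lemma nxt_min {l : ℕ} (h1 : j < l) (h2 : l < nxt u w j) : ¬ OccursAt u w l := by
  rw [nxt, dif_pos hx] at h2
  intro hocc
  exact Nat.find_min hx h2 ⟨h1, hocc⟩

lemma nxt_eq {m : ℕ} (hm : j < m) (hocc : OccursAt u w m)
    (hmin : ∀ l, j < l → l < m → ¬ OccursAt u w l) : nxt u w j = m := by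
  rw [nxt, dif_pos hx]
  rcases Nat.lt_trichotomy (Nat.find hx) m with hlt | heq | hgt
  · exact absurd (Nat.find_spec hx).2 (hmin _ (Nat.find_spec hx).1 hlt)
  · exact heq
  · exact absurd ⟨hm, hocc⟩ (Nat.find_min hx hgt)

lemma retAt_mem (hj : OccursAt u w j) : retAt u w j ∈ returnWords u w :=
  ⟨j, nxt u w j, nxt_gt hx, hj, nxt_occurs hx, fun l h1 h2 => nxt_min hx h1 h2, rfl⟩

omit hx in
lemma retAt_length : (retAt u w j).length = nxt u w j - j := by
  simp [retAt]

lemma retAt_length_pos : 0 < (retAt u w j).length := by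
  have := nxt_gt hx; rw [retAt_length]; omega

lemma nxt_eq_add : nxt u w j = j + (retAt u w j).length := by
  have := nxt_gt hx; rw [retAt_length]; omega

/-- `retAt ++ w` occurs at `j` -/
lemma retAt_append_occurs : OccursAt u (retAt u w j ++ w) j := by
  rw [occursAt_append]
  refine ⟨occursAt_factorAt u j _, ?_⟩
  have h1 := nxt_gt hx
  rw [retAt_length, show j + (nxt u w j - j) = nxt u w j by omega]
  exact nxt_occurs hx
end

/-- chain induction: a predicate preserved by `nxt` and holding at occurrence `j`
holds at all occurrences `≥ j` -/
lemma chain_ind {u : ℕ → A} {w : List A}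
    (hex : ∀ l, OccursAt u w l → ∃ k, l < k ∧ OccursAt u w k)
    (P : ℕ → Prop) {j : ℕ} (hj : OccursAt u w j) (hPj : P j)
    (step : ∀ m, OccursAt u w m → j ≤ m → P m → P (nxt u w m)) :
    ∀ m, OccursAt u w m → j ≤ m → P m := by
  intro m
  induction m using Nat.strong_induction_on with
  | _ m ih =>
    intro hm hjm
    rcases eq_or_lt_of_le hjm with heq | hlt
    · exact heq ▸ hPj
    · classical
      set l := Nat.findGreatest (OccursAt u w) (m - 1) with hl
      have hjl : j ≤ l := Nat.le_findGreatest (by omega) hj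
      have hQl : OccursAt u w l := Nat.findGreatest_spec (m := j) (by omega) hj
      have hlm : l < m := by have := Nat.findGreatest_le (P := OccursAt u w) (m - 1); omega
      have hnxt : nxt u w l = m := by
        apply nxt_eq (hex l hQl) hlm hm
        intro l' h1 h2 hocc
        exact Nat.findGreatest_is_greatest (hl ▸ h1) (by omega) hocc
      have hPl : P l := ih l hlm hQl hjl
      have := step l hQl hjl hPl
      rwa [hnxt] at this

/-- the letter following `w` as determined by a return word `ρ` -/
noncomputable def fol (u : ℕ → A) (w ρ : List A) : A := (ρ ++ w).getD w.length (u 0)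

lemma occursAt_singleton {u : ℕ → A} {b : A} {j : ℕ} : OccursAt u [b] j ↔ u j = b := by
  rw [occursAt_iff]
  constructor
  · intro h; simpa using h 0 (by simp)
  · intro h i hi
    simp only [List.length_singleton, Nat.lt_one_iff] at hi
    subst hi
    simpa using h

lemma occursAt_snoc {u : ℕ → A} {w : List A} {b : A} {j : ℕ} :
    OccursAt u (w ++ [b]) j ↔ OccursAt u w j ∧ u (j + w.length) = b := by
  rw [occursAt_append, occursAt_singleton]

lemma fol_retAt {u : ℕ → A} {w : List A} {j : ℕ} (hx : ∃ k, j < k ∧ OccursAt u w k) :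
    u (j + w.length) = fol u w (retAt u w j) := by
  have hocc := retAt_append_occurs hx
  rw [occursAt_iff] at hocc
  have hlen : w.length < (retAt u w j ++ w).length := by
    have := retAt_length_pos hx; simp; omega
  have := hocc w.length (by simpa using hlen)
  rw [fol, List.getD_eq_getElem _ _ hlen, ← this]

lemma retAt_getElem {u : ℕ → A} {w : List A} {m i : ℕ} (hi : i < (retAt u w m).length) :
    (retAt u w m)[i] = u (m + i) := by
  simp [retAt, factorAt]

lemma occursAt_factorAt_iff {u : ℕ → A} {n s : ℕ} :
    OccursAt u (factorAt u 0 n) s ↔ ∀ i, i < n → u (s + i) = u i := by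
  rw [occursAt_iff]
  constructor
  · intro h i hi
    have := h i (by simpa using hi)
    rwa [factorAt_getElem u hi, Nat.zero_add] at this
  · intro h i hi
    simp only [factorAt_length] at hi
    rw [factorAt_getElem u hi, Nat.zero_add]
    exact h i hi

lemma period_mul {u : ℕ → A} {q : ℕ} (hq : ∀ n, u (n + q) = u n) (m n : ℕ) :
    u (n + m * q) = u n := by
  induction m with
  | zero => simp
  | succ t ih => rw [show n + (t+1)*q = (n + t*q) + q by ring, hq, ih]

lemma period_mod {u : ℕ → A} {q : ℕ} (hq : ∀ n, u (n + q) = u n) (hq0 : 0 < q) (n : ℕ) :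
    u n = u (n % q) := by
  conv_lhs => rw [show n = n % q + (n / q) * q from by rw [Nat.mul_comm]; exact (Nat.mod_add_div n q).symm]
  exact period_mul hq _ _

section
variable {u : ℕ → A} (h : PropertyR u 2)
include h

lemma pure_of_eventually {p N : ℕ} (hp : 0 < p) (hev : ∀ n, N ≤ n → u (n + p) = u n) :
    ∀ n, u (n + p) = u n := by
  intro n
  rcases Nat.lt_or_ge n N with hn | hn
  · obtain ⟨k, hkN, hk⟩ := exists_occurs_ge h ⟨0, occursAt_factorAt u 0 (N + p)⟩ N
    rw [occursAt_factorAt_iff] at hk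
    have e1 : u (k + n) = u n := hk n (by omega)
    have e2 : u (k + (n + p)) = u (n + p) := hk (n + p) (by omega)
    have e3 : u ((k + n) + p) = u (k + n) := hev (k + n) (by omega)
    rw [← e2, show k + (n+p) = (k+n)+p by omega, e3, e1]
  · exact hev n hn
end

/-- If `u` satisfies property `R_2`, then `u` has no maximal right
special factor. -/
theorem no_maximalRightSpecial_of_propertyR_two [Fintype A] (u : ℕ → A) (h : PropertyR u 2) :
    ∀ w, ¬ MaximalRightSpecial u w := by
  classical
  rintro w ⟨hwf, hwrs, hmax⟩
  have hex : ∀ l, OccursAt u w l → ∃ k, l < k ∧ OccursAt u w k :=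
    fun l hl => exists_occurs_gt h hl
  -- two distinct right extensions
  obtain ⟨b, hbfac, c, hcfac, hbc⟩ :
      ∃ b ∈ rightExt u w, ∃ c ∈ rightExt u w, b ≠ c := by
    rw [← Set.one_lt_ncard (Set.toFinite _)]
    have := hwrs
    unfold RightSpecial at this
    omega
  have hbfac' : IsFactor u (w ++ [b]) := hbfac
  have hcfac' : IsFactor u (w ++ [c]) := hcfac
  obtain ⟨jb, hjb⟩ := hbfac
  rw [occursAt_snoc] at hjb
  obtain ⟨jc, hjc⟩ := hcfac
  rw [occursAt_snoc] at hjc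
  obtain ⟨hfin, hcard⟩ := h w hwf
  have hρb : retAt u w jb ∈ returnWords u w := retAt_mem (hex jb hjb.1) hjb.1
  have hρc : retAt u w jc ∈ returnWords u w := retAt_mem (hex jc hjc.1) hjc.1
  have hfb : fol u w (retAt u w jb) = b := by
    rw [← fol_retAt (hex jb hjb.1)]; exact hjb.2
  have hfc : fol u w (retAt u w jc) = c := by
    rw [← fol_retAt (hex jc hjc.1)]; exact hjc.2
  set ρb := retAt u w jb with hρbdef
  set ρc := retAt u w jc with hρcdef
  have hρne : ρb ≠ ρc := fun e => hbc (by rw [← hfb, ← hfc, e])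
  have hRpair : returnWords u w = {ρb, ρc} := by
    symm
    apply Set.eq_of_subset_of_ncard_le _ _ hfin
    · intro x hx
      simp only [Set.mem_insert_iff, Set.mem_singleton_iff] at hx
      rcases hx with rfl | rfl
      · exact hρb
      · exact hρc
    · rw [hcard, Set.ncard_pair hρne]
  have hmemR_len : ∀ ρ ∈ returnWords u w, 0 < ρ.length := by
    rintro ρ ⟨j, k, hjk, _, _, _, rfl⟩
    rw [factorAt_length]; omega
  have hfacR : ∀ ρ ∈ returnWords u w, IsFactor u (ρ ++ w) := by
    rintro ρ ⟨j, k, hjk, hj, hk, hmin, rfl⟩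
    refine ⟨j, ?_⟩
    rw [occursAt_append]
    refine ⟨occursAt_factorAt u j _, ?_⟩
    rw [factorAt_length, show j + (k - j) = k by omega]
    exact hk
  have huniq : ∀ ρ ∈ returnWords u w, ∀ a a', IsFactor u ((ρ ++ w) ++ [a]) →
      IsFactor u ((ρ ++ w) ++ [a']) → a = a' := by
    intro ρ hρ a a' ha ha'
    by_contra hne
    have hsub : {a, a'} ⊆ rightExt u (ρ ++ w) := by
      intro x hx
      simp only [Set.mem_insert_iff, Set.mem_singleton_iff] at hx
      rcases hx with rfl | rfl
      · exact ha
      · exact ha'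
    have hrs : RightSpecial u (ρ ++ w) := by
      unfold RightSpecial
      calc 2 = ({a, a'} : Set A).ncard := (Set.ncard_pair hne).symm
        _ ≤ _ := Set.ncard_le_ncard hsub (Set.toFinite _)
    have heq := hmax (ρ ++ w) (hfacR ρ hρ) hrs (List.suffix_append ρ w)
    have hnil : ρ = [] := by simpa using heq
    have hpos := hmemR_len ρ hρ
    rw [hnil] at hpos
    simp at hpos
  have hretmem : ∀ m, OccursAt u w m → retAt u w m ∈ returnWords u w :=
    fun m hm => retAt_mem (hex m hm) hm
  have hfolmem : ∀ m, OccursAt u w m → fol u w (retAt u w m) = u (m + w.length) :=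
    fun m hm => (fol_retAt (hex m hm)).symm
  have hfinj : ∀ ρ ∈ returnWords u w, ∀ σ ∈ returnWords u w,
      fol u w ρ = fol u w σ → ρ = σ := by
    intro ρ hρ σ hσ hfs
    rw [hRpair] at hρ hσ
    simp only [Set.mem_insert_iff, Set.mem_singleton_iff] at hρ hσ
    rcases hρ with rfl | rfl <;> rcases hσ with rfl | rfl
    · rfl
    · exact absurd (hfb ▸ hfc ▸ hfs) hbc
    · exact absurd (hfb ▸ hfc ▸ hfs.symm) hbc
    · rfl
  have hdet : ∀ m, OccursAt u w m → ∀ m', OccursAt u w m' → retAt u w m = retAt u w m' →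
      retAt u w (nxt u w m) = retAt u w (nxt u w m') := by
    intro m hm m' hm' hret
    have hkocc := nxt_occurs (hex m hm)
    have hkocc' := nxt_occurs (hex m' hm')
    have hfac1 : IsFactor u ((retAt u w m ++ w) ++ [u (nxt u w m + w.length)]) := by
      refine ⟨m, ?_⟩
      rw [occursAt_snoc]
      refine ⟨retAt_append_occurs (hex m hm), ?_⟩
      have e1 := nxt_eq_add (hex m hm)
      rw [List.length_append]
      congr 1
      omega
    have hfac2 : IsFactor u ((retAt u w m ++ w) ++ [u (nxt u w m' + w.length)]) := by
      rw [hret]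
      refine ⟨m', ?_⟩
      rw [occursAt_snoc]
      refine ⟨retAt_append_occurs (hex m' hm'), ?_⟩
      have e1 := nxt_eq_add (hex m' hm')
      rw [List.length_append]
      congr 1
      omega
    have ha := huniq _ (hretmem m hm) _ _ hfac1 hfac2
    apply hfinj _ (hretmem _ hkocc) _ (hretmem _ hkocc')
    rw [hfolmem _ hkocc, hfolmem _ hkocc']
    exact ha
  have halt : ∀ m, OccursAt u w m → retAt u w (nxt u w m) ≠ retAt u w m := by
    intro m hm heq
    obtain ⟨γ, hγfac, hγne⟩ : ∃ γ, IsFactor u (w ++ [γ]) ∧ fol u w (retAt u w m) ≠ γ := by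
      by_cases hfb' : fol u w (retAt u w m) = b
      · exact ⟨c, hcfac', by rw [hfb']; exact hbc⟩
      · exact ⟨b, hbfac', hfb'⟩
    obtain ⟨m', hm'ge, hm'occ⟩ := exists_occurs_ge h hγfac m
    rw [occursAt_snoc] at hm'occ
    have hchain := chain_ind hex (fun l => retAt u w l = retAt u w m) hm rfl
      (fun l hl hjl hPl => by
        show retAt u w (nxt u w l) = retAt u w m
        rw [hdet l hl m hm hPl]; exact heq) m' hm'occ.1 hm'ge
    apply hγne
    rw [← hchain, hfolmem m' hm'occ.1, hm'occ.2]
  -- the period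
  set p := ρb.length + ρc.length with hpdef
  have hppos : 0 < p := by
    have := hmemR_len ρb hρb
    omega
  have htwo : ∀ x ∈ returnWords u w, ∀ y ∈ returnWords u w, ∀ z ∈ returnWords u w,
      x ≠ z → y ≠ z → x = y := by
    intro x hx y hy z hz hxz hyz
    rw [hRpair] at hx hy hz
    simp only [Set.mem_insert_iff, Set.mem_singleton_iff] at hx hy hz
    rcases hx with rfl | rfl <;> rcases hy with rfl | rfl <;> rcases hz with rfl | rfl <;> tauto
  have hsum : ∀ m, OccursAt u w m →
      (retAt u w m).length + (retAt u w (nxt u w m)).length = p := by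
    intro m hm
    have h1 := hretmem m hm
    have h2 := hretmem _ (nxt_occurs (hex m hm))
    have hne2 := halt m hm
    rw [hRpair] at h1 h2
    simp only [Set.mem_insert_iff, Set.mem_singleton_iff] at h1 h2
    rcases h1 with e1 | e1 <;> rcases h2 with e2 | e2
    · exact absurd (e2.trans e1.symm) hne2
    · rw [e1, e2]
    · rw [e1, e2]; omega
    · exact absurd (e2.trans e1.symm) hne2
  have hstep2 : ∀ m, OccursAt u w m →
      OccursAt u w (m + p) ∧ retAt u w (m + p) = retAt u w m := by
    intro m hm
    have hk := nxt_occurs (hex m hm)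
    have e1 : nxt u w m = m + (retAt u w m).length := nxt_eq_add (hex m hm)
    have e2 : nxt u w (nxt u w m) = m + p := by
      rw [nxt_eq_add (hex _ hk)]
      have h3 := hsum m hm
      omega
    have hkk := nxt_occurs (hex _ hk)
    rw [e2] at hkk
    refine ⟨hkk, ?_⟩
    have hne3 := halt _ hk
    rw [e2] at hne3
    exact htwo _ (hretmem _ hkk) _ (hretmem m hm) _ (hretmem _ hk) hne3 (Ne.symm (halt m hm))
  have hblock : ∀ m, OccursAt u w m → ∀ i, i < (retAt u w m).length →
      u (m + p + i) = u (m + i) := by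
    intro m hm i hi
    obtain ⟨hocc2, hret2⟩ := hstep2 m hm
    have g1 : (retAt u w m)[i]'hi = u (m + i) := retAt_getElem hi
    have hi2 : i < (retAt u w (m + p)).length := by rw [hret2]; exact hi
    have g2 : (retAt u w (m + p))[i]'hi2 = u (m + p + i) := retAt_getElem hi2
    have g3 : (retAt u w (m + p))[i]'hi2 = (retAt u w m)[i]'hi := by simp only [hret2]
    rw [← g2, g3, g1]
  obtain ⟨j0, hj0⟩ := hwf
  have hev : ∀ n, j0 ≤ n → u (n + p) = u n := by
    intro n hn
    set m := Nat.findGreatest (OccursAt u w) n with hmdef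
    have hmocc : OccursAt u w m := Nat.findGreatest_spec hn hj0
    have hmn : m ≤ n := Nat.findGreatest_le n
    have hnlt : n < nxt u w m := by
      by_contra hge
      push_neg at hge
      exact Nat.findGreatest_is_greatest (nxt_gt (hex m hmocc)) hge (nxt_occurs (hex m hmocc))
    have hi : n - m < (retAt u w m).length := by
      rw [retAt_length]; omega
    have hb2 := hblock m hmocc (n - m) hi
    rw [show m + p + (n - m) = n + p by omega, show m + (n - m) = n by omega] at hb2
    exact hb2
  have hper : ∀ n, u (n + p) = u n := pure_of_eventually h hppos hev
  -- minimal period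
  have hminex : ∃ q, 0 < q ∧ ∀ n, u (n + q) = u n := ⟨p, hppos, hper⟩
  obtain ⟨hq0, hqper⟩ := Nat.find_spec hminex
  set q := Nat.find hminex with hqdef
  have humod : ∀ n, u n = u (n % q) := period_mod hqper hq0
  have hWfac : IsFactor u (factorAt u 0 (q + q)) := ⟨0, occursAt_factorAt u 0 _⟩
  have hWocc : ∀ s, OccursAt u (factorAt u 0 (q + q)) s ↔ q ∣ s := by
    intro s
    rw [occursAt_factorAt_iff]
    constructor
    · intro hs
      have key : ∀ i, i < q + q → u (s % q + i) = u i := by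
        intro i hi
        rw [humod (s % q + i), Nat.mod_add_mod, ← humod (s + i), hs i hi]
      have hsper : ∀ n, u (n + s % q) = u n := by
        intro n
        have e1 : u (n + s % q) = u (n % q + s % q) := by
          rw [humod (n + s % q), humod (n % q + s % q), Nat.add_mod_mod, Nat.mod_add_mod,
            Nat.add_mod_mod]
        have hlt : n % q < q + q := by
          have := Nat.mod_lt n hq0
          omega
        rw [e1, Nat.add_comm (n % q) (s % q), key (n % q) hlt, ← humod n]
      by_contra hndvd
      have hne0 : s % q ≠ 0 := fun e => hndvd (Nat.dvd_of_mod_eq_zero e)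
      exact Nat.find_min hminex (Nat.mod_lt s hq0) ⟨Nat.pos_of_ne_zero hne0, hsper⟩
    · rintro ⟨t, rfl⟩ i hi
      rw [show q * t + i = i + t * q by ring, period_mul hqper]
  have hsub : returnWords u (factorAt u 0 (q + q)) ⊆ {factorAt u 0 q} := by
    rintro v ⟨j, k, hjk, hj, hk, hmin, rfl⟩
    obtain ⟨a, rfl⟩ := (hWocc j).1 hj
    obtain hkdvd := (hWocc k).1 hk
    have hk' : k = q * a + q := by
      have h1 : OccursAt u (factorAt u 0 (q + q)) (q * a + q) :=
        (hWocc _).2 ⟨a + 1, by ring⟩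
      rcases Nat.lt_trichotomy k (q * a + q) with hlt | heq | hgt
      · obtain ⟨b', rfl⟩ := hkdvd
        have h2 : a < b' := Nat.lt_of_mul_lt_mul_left hjk
        have h3 : q * (a + 1) ≤ q * b' := Nat.mul_le_mul_left q h2
        have h4 : q * (a + 1) = q * a + q := by ring
        omega
      · exact heq
      · exact absurd h1 (hmin _ (by omega) hgt)
    subst hk'
    simp only [Set.mem_singleton_iff]
    rw [show q * a + q - q * a = q by omega]
    apply List.ext_getElem (by simp)
    intro i h1 h2
    rw [factorAt_getElem u (by simpa using h1), factorAt_getElem u (by simpa using h2),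
      Nat.zero_add, show q * a + i = i + a * q by ring, period_mul hqper]
  have hW2 := (h _ hWfac).2
  have hW1 : (returnWords u (factorAt u 0 (q + q))).ncard ≤ 1 := by
    have := Set.ncard_le_ncard hsub (Set.finite_singleton _)
    simpa using this
  omega
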